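/- If ‖λ̄‖ > C, then Σ_{j∈S} e_j ‖y_j − ȳ‖² ≤ Σ_{j∈S} e_j ‖λ_j − λ̄‖² − (1 − Σ_{j∈S^c} e_j)·(‖λ̄‖ − C)² − Σ_{j∈S^c} e_j (‖λ_j‖ − ‖λ̄‖)². -/

import Mathlib

/-!
Measured against the old mean `λ̄`, the variance of the `y_j` is `Σ e_j ‖y_j - λ̄‖² - ‖ȳ - λ̄‖²`,
and `‖ȳ - λ̄‖ ≥ ‖λ̄‖ - C > 0` because `ȳ`, an average of vectors of norm at most `C`, lies in the
`C`-ball. For `j ∈ S^c` we have `y_j = t λ_j` with `t ≤ 1` and `t ‖λ_j‖ = C`, and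
`‖t λ_j - λ̄‖² = ‖λ_j - λ̄‖² - (‖λ_j‖ - ‖λ̄‖)² + (C - ‖λ̄‖)² - 2(1 - t)(‖λ_j‖ ‖λ̄‖ - ⟪λ_j, λ̄⟫)`,
where the last term is nonpositive by Cauchy–Schwarz.
-/

/-- The clipping operator `clip_C(v) = min(1, C/‖v‖)·v` (with `clip_C(0) = 0`,
since in Lean `C/0 = 0`). -/
noncomputable def clip {E : Type*} [NormedAddCommGroup E] [InnerProductSpace ℝ E]
    (C : ℝ) (v : E) : E := min 1 (C / ‖v‖) • v

open Finset RealInnerProductSpace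

section InnerProductSpace

variable {E : Type*} [NormedAddCommGroup E] [InnerProductSpace ℝ E]

theorem norm_smul_sub_sq_le {t : ℝ} (ht : t ≤ 1) (a b : E) :
    ‖t • a - b‖ ^ 2 ≤ ‖a - b‖ ^ 2 - (‖a‖ - ‖b‖) ^ 2 + (t * ‖a‖ - ‖b‖) ^ 2 := by
  have hcs : ⟪a, b⟫ ≤ ‖a‖ * ‖b‖ := real_inner_le_norm a b
  rw [norm_sub_sq_real, norm_sub_sq_real, norm_smul, mul_pow, Real.norm_eq_abs, sq_abs,
    real_inner_smul_left]
  nlinarith [mul_le_mul_of_nonneg_left hcs (sub_nonneg.2 ht)]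

theorem clip_of_norm_le {C : ℝ} {v : E} (h : ‖v‖ ≤ C) : clip C v = v := by
  rcases eq_or_ne v 0 with rfl | hv
  · simp [clip]
  · rw [clip, min_eq_left ((one_le_div (norm_pos_iff.2 hv)).2 h), one_smul]

theorem clip_of_lt_norm {C : ℝ} {v : E} (h : C < ‖v‖) : clip C v = (C / ‖v‖) • v := by
  rcases eq_or_ne v 0 with rfl | hv
  · simp [clip]
  · rw [clip, min_eq_right ((div_le_one (norm_pos_iff.2 hv)).2 h.le)]

theorem norm_clip_le {C : ℝ} (hC : 0 ≤ C) (v : E) : ‖clip C v‖ ≤ C := by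
  rcases le_or_gt ‖v‖ C with h | h
  · rwa [clip_of_norm_le h]
  · rw [clip_of_lt_norm h, norm_smul, Real.norm_of_nonneg (div_nonneg hC (norm_nonneg v)),
      div_mul_cancel₀ _ (hC.trans_lt h).ne']

theorem norm_clip_sub_sq_le {C : ℝ} {a : E} (ha : C < ‖a‖) (b : E) :
    ‖clip C a - b‖ ^ 2 ≤ ‖a - b‖ ^ 2 - (‖a‖ - ‖b‖) ^ 2 + (‖b‖ - C) ^ 2 := by
  rcases eq_or_ne a 0 with rfl | ha0
  · simp only [norm_zero] at ha
    simp only [clip, smul_zero, norm_zero]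
    nlinarith [norm_nonneg b]
  have hpos : 0 < ‖a‖ := norm_pos_iff.2 ha0
  have key := norm_smul_sub_sq_le ((div_le_one hpos).2 ha.le) a b
  rwa [div_mul_cancel₀ _ hpos.ne', ← clip_of_lt_norm ha, sub_sq_comm C] at key

section WeightedSum

variable {ι : Type*} {S : Finset ι} {e : ι → ℝ}

theorem sum_mul_norm_sub_weighted_mean_sq (hsum : ∑ j ∈ S, e j = 1) (x : ι → E) (a : E) :
    ∑ j ∈ S, e j * ‖x j - ∑ k ∈ S, e k • x k‖ ^ 2
      = ∑ j ∈ S, e j * ‖x j - a‖ ^ 2 - ‖∑ k ∈ S, e k • x k - a‖ ^ 2 := by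
  set m := ∑ k ∈ S, e k • x k
  have hcentered : ∑ j ∈ S, e j • (x j - a) = m - a := by
    rw [sum_congr rfl fun j _ => smul_sub (e j) (x j) a, sum_sub_distrib, ← sum_smul, hsum,
      one_smul]
  have hcross : ∑ j ∈ S, e j * ⟪x j - a, m - a⟫ = ‖m - a‖ ^ 2 := by
    simp only [← real_inner_smul_left, ← sum_inner, hcentered, real_inner_self_eq_norm_sq]
  have hexpand : ∀ j, ‖x j - m‖ ^ 2 = ‖x j - a‖ ^ 2 - 2 * ⟪x j - a, m - a⟫ + ‖m - a‖ ^ 2 := by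
    intro j
    rw [← sub_sub_sub_cancel_right (x j) m a, norm_sub_sq_real]
  simp only [hexpand, mul_add, mul_sub, sum_add_distrib, sum_sub_distrib, ← sum_mul, hsum,
    mul_left_comm _ (2 : ℝ), ← mul_sum, hcross]
  ring

theorem norm_weighted_sum_le {C : ℝ} (he : ∀ j ∈ S, 0 ≤ e j) (hsum : ∑ j ∈ S, e j = 1)
    {x : ι → E} (hx : ∀ j ∈ S, ‖x j‖ ≤ C) : ‖∑ j ∈ S, e j • x j‖ ≤ C :=
  mem_closedBall_zero_iff.1 <|
    (convex_closedBall 0 C).sum_mem he hsum fun j hj => mem_closedBall_zero_iff.2 (hx j hj)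

theorem sum_mul_norm_clip_sub_sq_le {C : ℝ} (he : ∀ j ∈ S, 0 ≤ e j) (x : ι → E) (b : E) :
    ∑ j ∈ S, e j * ‖clip C (x j) - b‖ ^ 2
      ≤ ∑ j ∈ S, e j * ‖x j - b‖ ^ 2
        + (∑ j ∈ S.filter (fun j => C < ‖x j‖), e j) * (‖b‖ - C) ^ 2
        - ∑ j ∈ S.filter (fun j => C < ‖x j‖), e j * (‖x j‖ - ‖b‖) ^ 2 := by
  have hclipped : ∑ j ∈ S.filter (fun j => C < ‖x j‖), e j * ‖clip C (x j) - b‖ ^ 2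
      ≤ ∑ j ∈ S.filter (fun j => C < ‖x j‖),
          e j * (‖x j - b‖ ^ 2 - (‖x j‖ - ‖b‖) ^ 2 + (‖b‖ - C) ^ 2) :=
    sum_le_sum fun j hj => mul_le_mul_of_nonneg_left
      (norm_clip_sub_sq_le (mem_filter.1 hj).2 b) (he j (mem_filter.1 hj).1)
  have hkept : ∑ j ∈ S.filter (fun j => ¬C < ‖x j‖), e j * ‖clip C (x j) - b‖ ^ 2
      = ∑ j ∈ S.filter (fun j => ¬C < ‖x j‖), e j * ‖x j - b‖ ^ 2 :=
    sum_congr rfl fun j hj => by rw [clip_of_norm_le (not_lt.1 (mem_filter.1 hj).2)]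
  simp only [mul_add, mul_sub, sum_add_distrib, sum_sub_distrib, ← sum_mul] at hclipped
  rw [← sum_filter_add_sum_filter_not S (fun j => C < ‖x j‖),
    ← sum_filter_add_sum_filter_not S (fun j => C < ‖x j‖) (fun j => e j * ‖x j - b‖ ^ 2)]
  linarith

end WeightedSum

end InnerProductSpace

theorem clipping_variance_reduction_large_mean_general
    {E : Type*} [NormedAddCommGroup E] [InnerProductSpace ℝ E]
    {ι : Type*} (S : Finset ι)
    (e : ι → ℝ) (he : ∀ j ∈ S, 0 ≤ e j) (hsum : ∑ j ∈ S, e j = 1)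
    (lam : ι → E) (C : ℝ) (hC : 0 ≤ C)
    (hmean : C < ‖∑ j ∈ S, e j • lam j‖) :
    ∑ j ∈ S, e j * ‖clip C (lam j) - ∑ k ∈ S, e k • clip C (lam k)‖ ^ 2
      ≤ ∑ j ∈ S, e j * ‖lam j - ∑ k ∈ S, e k • lam k‖ ^ 2
        - (1 - ∑ j ∈ S.filter (fun j => C < ‖lam j‖), e j)
            * (‖∑ j ∈ S, e j • lam j‖ - C) ^ 2
        - ∑ j ∈ S.filter (fun j => C < ‖lam j‖),
            e j * (‖lam j‖ - ‖∑ k ∈ S, e k • lam k‖) ^ 2 := by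
  set lbar := ∑ k ∈ S, e k • lam k
  set ybar := ∑ k ∈ S, e k • clip C (lam k)
  have hybar : ‖ybar‖ ≤ C := norm_weighted_sum_le he hsum fun j _ => norm_clip_le hC (lam j)
  have hshift : (‖lbar‖ - C) ^ 2 ≤ ‖ybar - lbar‖ ^ 2 := by
    refine pow_le_pow_left₀ (sub_nonneg.2 hmean.le) ?_ 2
    linarith [norm_sub_norm_le lbar ybar, norm_sub_rev lbar ybar]
  rw [sum_mul_norm_sub_weighted_mean_sq hsum (fun j => clip C (lam j)) lbar]
  linarith [sum_mul_norm_clip_sub_sq_le (C := C) he lam lbar]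

/-- **Variance-reduction property of clipping, case ‖λ̄‖ > C
(Lemma, Case 2).** -/
theorem clipping_variance_reduction_large_mean
    {E : Type*} [NormedAddCommGroup E] [InnerProductSpace ℝ E]
    {ι : Type*} [DecidableEq ι] (S : Finset ι) (hS : S.Nonempty)
    (e : ι → ℝ) (he : ∀ j ∈ S, 0 ≤ e j) (hsum : ∑ j ∈ S, e j = 1)
    (lam : ι → E) (C : ℝ) (hC : 0 ≤ C)
    (hmean : C < ‖∑ j ∈ S, e j • lam j‖) :
    ∑ j ∈ S, e j * ‖clip C (lam j) - ∑ k ∈ S, e k • clip C (lam k)‖ ^ 2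
      ≤ ∑ j ∈ S, e j * ‖lam j - ∑ k ∈ S, e k • lam k‖ ^ 2
        - (1 - ∑ j ∈ S.filter (fun j => C < ‖lam j‖), e j)
            * (‖∑ j ∈ S, e j • lam j‖ - C) ^ 2
        - ∑ j ∈ S.filter (fun j => C < ‖lam j‖),
            e j * (‖lam j‖ - ‖∑ k ∈ S, e k • lam k‖) ^ 2 :=
  clipping_variance_reduction_large_mean_general S e he hsum lam C hC hmean
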